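/- arXiv:dg-ga/9508007 — 3 statements merged into one kernel-verified Lean document; each statement's English description precedes it below -/
import Mathlib

section
/- Let X1, X2, X3 ∈ SL(2,C) and set x_i = tr X_i, y_{ij} = tr(X_i X_j), z = tr(X1 X2 X3). Define P = x1 y23 + x2 y13 + x3 y12 − x1 x2 x3 and Q = x1^2 + x2^2 + x3^2 + y12^2 + y13^2 + y23^2 + y12 y13 y23 − x1 x2 y12 − x1 x3 y13 − x2 x3 y23 − 4. Then z^2 − P z + Q = 0. -/
open Matrix

/-- Vogt's theorem: tr(X₁X₂X₃) satisfies z² − Pz + Q = 0 with P, Q polynomials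
in the traces xᵢ = tr Xᵢ, yᵢⱼ = tr(XᵢXⱼ). -/
theorem vogt_quadratic (X1 X2 X3 : Matrix.SpecialLinearGroup (Fin 2) ℂ) :
    let x1 := Matrix.trace (X1 : Matrix (Fin 2) (Fin 2) ℂ)
    let x2 := Matrix.trace (X2 : Matrix (Fin 2) (Fin 2) ℂ)
    let x3 := Matrix.trace (X3 : Matrix (Fin 2) (Fin 2) ℂ)
    let y12 := Matrix.trace ((X1 * X2 : Matrix.SpecialLinearGroup (Fin 2) ℂ) : Matrix (Fin 2) (Fin 2) ℂ)
    let y13 := Matrix.trace ((X1 * X3 : Matrix.SpecialLinearGroup (Fin 2) ℂ) : Matrix (Fin 2) (Fin 2) ℂ)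
    let y23 := Matrix.trace ((X2 * X3 : Matrix.SpecialLinearGroup (Fin 2) ℂ) : Matrix (Fin 2) (Fin 2) ℂ)
    let z := Matrix.trace ((X1 * X2 * X3 : Matrix.SpecialLinearGroup (Fin 2) ℂ) : Matrix (Fin 2) (Fin 2) ℂ)
    let P := x1 * y23 + x2 * y13 + x3 * y12 - x1 * x2 * x3
    let Q := x1 ^ 2 + x2 ^ 2 + x3 ^ 2 + y12 ^ 2 + y13 ^ 2 + y23 ^ 2 + y12 * y13 * y23 -
      x1 * x2 * y12 - x1 * x3 * y13 - x2 * x3 * y23 - 4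
    z ^ 2 - P * z + Q = 0 := by
  have hdet1 : (X1 : Matrix (Fin 2) (Fin 2) ℂ) 0 0 * (X1 : Matrix (Fin 2) (Fin 2) ℂ) 1 1
      - (X1 : Matrix (Fin 2) (Fin 2) ℂ) 0 1 * (X1 : Matrix (Fin 2) (Fin 2) ℂ) 1 0 = 1 := by
    rw [← Matrix.det_fin_two]; exact X1.property
  have hdet2 : (X2 : Matrix (Fin 2) (Fin 2) ℂ) 0 0 * (X2 : Matrix (Fin 2) (Fin 2) ℂ) 1 1
      - (X2 : Matrix (Fin 2) (Fin 2) ℂ) 0 1 * (X2 : Matrix (Fin 2) (Fin 2) ℂ) 1 0 = 1 := by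
    rw [← Matrix.det_fin_two]; exact X2.property
  have hdet3 : (X3 : Matrix (Fin 2) (Fin 2) ℂ) 0 0 * (X3 : Matrix (Fin 2) (Fin 2) ℂ) 1 1
      - (X3 : Matrix (Fin 2) (Fin 2) ℂ) 0 1 * (X3 : Matrix (Fin 2) (Fin 2) ℂ) 1 0 = 1 := by
    rw [← Matrix.det_fin_two]; exact X3.property
  set a1 := (X1 : Matrix (Fin 2) (Fin 2) ℂ) 0 0
  set b1 := (X1 : Matrix (Fin 2) (Fin 2) ℂ) 0 1
  set c1 := (X1 : Matrix (Fin 2) (Fin 2) ℂ) 1 0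
  set d1 := (X1 : Matrix (Fin 2) (Fin 2) ℂ) 1 1
  set a2 := (X2 : Matrix (Fin 2) (Fin 2) ℂ) 0 0
  set b2 := (X2 : Matrix (Fin 2) (Fin 2) ℂ) 0 1
  set c2 := (X2 : Matrix (Fin 2) (Fin 2) ℂ) 1 0
  set d2 := (X2 : Matrix (Fin 2) (Fin 2) ℂ) 1 1
  set a3 := (X3 : Matrix (Fin 2) (Fin 2) ℂ) 0 0
  set b3 := (X3 : Matrix (Fin 2) (Fin 2) ℂ) 0 1
  set c3 := (X3 : Matrix (Fin 2) (Fin 2) ℂ) 1 0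
  set d3 := (X3 : Matrix (Fin 2) (Fin 2) ℂ) 1 1
  simp only [Matrix.SpecialLinearGroup.coe_mul, Matrix.trace_fin_two, Matrix.mul_apply,
    Fin.sum_univ_two]
  linear_combination
    (2 + (-1)*d3^2 + (-1)*a3^2 + (-1)*d2^2 + d2^2*a3*d3 + (-1)*c2*d2*b3*d3 + c2*d2*a3*b3
      + (-1)*c2^2*b3^2 + (-1)*b2*d2*c3*d3 + b2*d2*a3*c3 + (-1)*b2^2*c3^2 + a2*d2*d3^2
      + (-2)*a2*d2*a3*d3 + a2*d2*a3^2 + a2*c2*b3*d3 + (-1)*a2*c2*a3*b3 + a2*b2*c3*d3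
      + (-1)*a2*b2*a3*c3 + (-1)*a2^2 + a2^2*a3*d3) * hdet1 +
    (2 + (-2)*a3*d3 + (-1)*d1^2 + d1^2*a3*d3 + (-1)*c1*d1*b3*d3 + c1*d1*a3*b3
      + (-1)*c1^2*b3^2 + (-1)*b1*d1*c3*d3 + b1*d1*a3*c3 + b1*c1*d3^2 + (-2)*b1*c1*a3*d3
      + b1*c1*a3^2 + (-1)*b1^2*c3^2 + a1*c1*b3*d3 + (-1)*a1*c1*a3*b3 + a1*b1*c3*d3
      + (-1)*a1*b1*a3*c3 + (-1)*a1^2 + a1^2*a3*d3) * hdet2 +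
    ((-2)*b2*c2 + d1^2*b2*c2 + (-1)*c1*d1*b2*d2 + c1*d1*a2*b2 + (-1)*c1^2*b2^2
      + (-1)*b1*d1*c2*d2 + b1*d1*a2*c2 + (-2)*b1*c1 + b1*c1*d2^2 + (-2)*b1*c1*b2*c2
      + b1*c1*a2^2 + (-1)*b1^2*c2^2 + a1*c1*b2*d2 + (-1)*a1*c1*a2*b2 + a1*b1*c2*d2
      + (-1)*a1*b1*a2*c2 + a1^2*b2*c2) * hdet3
end

section
/- Let X1, X2, X3 ∈ SL(2,C) with notation as in Vogt's theorem: P = x1 y23 + x2 y13 + x3 y12 − x1 x2 x3. Then tr(X1 X2 X3) + tr(X2 X1 X3) = P. -/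
lemma vogt_sum_aux (A B C : Matrix (Fin 2) (Fin 2) ℂ) :
    (A * B * C).trace + (B * A * C).trace =
      A.trace * (B * C).trace + B.trace * (A * C).trace + C.trace * (A * B).trace -
        A.trace * B.trace * C.trace := by
  simp only [Matrix.trace, Matrix.mul_apply, Matrix.diag, Fin.sum_univ_two]
  ring

/-- The sum of the two roots of Vogt's quadratic: tr(X₁X₂X₃) + tr(X₂X₁X₃) = P. -/
theorem vogt_sum (X1 X2 X3 : Matrix.SpecialLinearGroup (Fin 2) ℂ) :
    let x1 := Matrix.trace (X1 : Matrix (Fin 2) (Fin 2) ℂ)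
    let x2 := Matrix.trace (X2 : Matrix (Fin 2) (Fin 2) ℂ)
    let x3 := Matrix.trace (X3 : Matrix (Fin 2) (Fin 2) ℂ)
    let y12 := Matrix.trace ((X1 * X2 : Matrix.SpecialLinearGroup (Fin 2) ℂ) : Matrix (Fin 2) (Fin 2) ℂ)
    let y13 := Matrix.trace ((X1 * X3 : Matrix.SpecialLinearGroup (Fin 2) ℂ) : Matrix (Fin 2) (Fin 2) ℂ)
    let y23 := Matrix.trace ((X2 * X3 : Matrix.SpecialLinearGroup (Fin 2) ℂ) : Matrix (Fin 2) (Fin 2) ℂ)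
    Matrix.trace ((X1 * X2 * X3 : Matrix.SpecialLinearGroup (Fin 2) ℂ) : Matrix (Fin 2) (Fin 2) ℂ) +
      Matrix.trace ((X2 * X1 * X3 : Matrix.SpecialLinearGroup (Fin 2) ℂ) : Matrix (Fin 2) (Fin 2) ℂ) =
      x1 * y23 + x2 * y13 + x3 * y12 - x1 * x2 * x3 := by
  intro x1 x2 x3 y12 y13 y23
  simp only [x1, x2, x3, y12, y13, y23, Matrix.SpecialLinearGroup.coe_mul]
  linear_combination vogt_sum_aux (X1 : Matrix (Fin 2) (Fin 2) ℂ) X2 X3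
end

section
/- Let X1, X2, X3 ∈ SL(2,C) with notation as in Vogt's theorem: Q = x1^2+x2^2+x3^2+y12^2+y13^2+y23^2+y12 y13 y23 − x1x2y12 − x1x3y13 − x2x3y23 − 4. Then tr(X1 X2 X3)·tr(X2 X1 X3) = Q. -/
/-- The product of the two roots of Vogt's quadratic: tr(X₁X₂X₃)·tr(X₂X₁X₃) = Q. -/
theorem vogt_product (X1 X2 X3 : Matrix.SpecialLinearGroup (Fin 2) ℂ) :
    let x1 := Matrix.trace (X1 : Matrix (Fin 2) (Fin 2) ℂ)
    let x2 := Matrix.trace (X2 : Matrix (Fin 2) (Fin 2) ℂ)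
    let x3 := Matrix.trace (X3 : Matrix (Fin 2) (Fin 2) ℂ)
    let y12 := Matrix.trace ((X1 * X2 : Matrix.SpecialLinearGroup (Fin 2) ℂ) : Matrix (Fin 2) (Fin 2) ℂ)
    let y13 := Matrix.trace ((X1 * X3 : Matrix.SpecialLinearGroup (Fin 2) ℂ) : Matrix (Fin 2) (Fin 2) ℂ)
    let y23 := Matrix.trace ((X2 * X3 : Matrix.SpecialLinearGroup (Fin 2) ℂ) : Matrix (Fin 2) (Fin 2) ℂ)
    Matrix.trace ((X1 * X2 * X3 : Matrix.SpecialLinearGroup (Fin 2) ℂ) : Matrix (Fin 2) (Fin 2) ℂ) *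
      Matrix.trace ((X2 * X1 * X3 : Matrix.SpecialLinearGroup (Fin 2) ℂ) : Matrix (Fin 2) (Fin 2) ℂ) =
      x1 ^ 2 + x2 ^ 2 + x3 ^ 2 + y12 ^ 2 + y13 ^ 2 + y23 ^ 2 + y12 * y13 * y23 -
        x1 * x2 * y12 - x1 * x3 * y13 - x2 * x3 * y23 - 4 := by
  intro x1 x2 x3 y12 y13 y23
  have h1 : ((X1 : Matrix (Fin 2) (Fin 2) ℂ)).det = 1 := X1.2
  have h2 : ((X2 : Matrix (Fin 2) (Fin 2) ℂ)).det = 1 := X2.2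
  have h3 : ((X3 : Matrix (Fin 2) (Fin 2) ℂ)).det = 1 := X3.2
  rw [Matrix.det_fin_two] at h1 h2 h3
  set a1 := (X1 : Matrix (Fin 2) (Fin 2) ℂ) 0 0
  set b1 := (X1 : Matrix (Fin 2) (Fin 2) ℂ) 0 1
  set c1 := (X1 : Matrix (Fin 2) (Fin 2) ℂ) 1 0
  set d1 := (X1 : Matrix (Fin 2) (Fin 2) ℂ) 1 1
  set a2 := (X2 : Matrix (Fin 2) (Fin 2) ℂ) 0 0
  set b2 := (X2 : Matrix (Fin 2) (Fin 2) ℂ) 0 1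
  set c2 := (X2 : Matrix (Fin 2) (Fin 2) ℂ) 1 0
  set d2 := (X2 : Matrix (Fin 2) (Fin 2) ℂ) 1 1
  set a3 := (X3 : Matrix (Fin 2) (Fin 2) ℂ) 0 0
  set b3 := (X3 : Matrix (Fin 2) (Fin 2) ℂ) 0 1
  set c3 := (X3 : Matrix (Fin 2) (Fin 2) ℂ) 1 0
  set d3 := (X3 : Matrix (Fin 2) (Fin 2) ℂ) 1 1
  simp only [x1, x2, x3, y12, y13, y23, Matrix.SpecialLinearGroup.coe_mul,
    Matrix.trace_fin_two, Matrix.mul_apply, Fin.sum_univ_two]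
  linear_combination ((-2:ℂ) + (1:ℂ)*d3*d3 + (1:ℂ)*a3*a3 + (1:ℂ)*d2*d2 + (-1:ℂ)*d2*d2*a3*d3 + (1:ℂ)*c2*d2*b3*d3 + (-1:ℂ)*c2*d2*a3*b3 + (1:ℂ)*c2*c2*b3*b3 + (1:ℂ)*b2*d2*c3*d3 + (-1:ℂ)*b2*d2*a3*c3 + (1:ℂ)*b2*b2*c3*c3 + (-1:ℂ)*a2*d2*d3*d3 + (2:ℂ)*a2*d2*a3*d3 + (-1:ℂ)*a2*d2*a3*a3 + (-1:ℂ)*a2*c2*b3*d3 + (1:ℂ)*a2*c2*a3*b3 + (-1:ℂ)*a2*b2*c3*d3 + (1:ℂ)*a2*b2*a3*c3 + (1:ℂ)*a2*a2 + (-1:ℂ)*a2*a2*a3*d3) * h1 + ((-2:ℂ) + (2:ℂ)*a3*d3 + (1:ℂ)*d1*d1 + (-1:ℂ)*d1*d1*a3*d3 + (1:ℂ)*c1*d1*b3*d3 + (-1:ℂ)*c1*d1*a3*b3 + (1:ℂ)*c1*c1*b3*b3 + (1:ℂ)*b1*d1*c3*d3 + (-1:ℂ)*b1*d1*a3*c3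 + (-1:ℂ)*b1*c1*d3*d3 + (2:ℂ)*b1*c1*a3*d3 + (-1:ℂ)*b1*c1*a3*a3 + (1:ℂ)*b1*b1*c3*c3 + (-1:ℂ)*a1*c1*b3*d3 + (1:ℂ)*a1*c1*a3*b3 + (-1:ℂ)*a1*b1*c3*d3 + (1:ℂ)*a1*b1*a3*c3 + (1:ℂ)*a1*a1 + (-1:ℂ)*a1*a1*a3*d3) * h2 + ((2:ℂ)*b2*c2 + (-1:ℂ)*d1*d1*b2*c2 + (1:ℂ)*c1*d1*b2*d2 + (-1:ℂ)*c1*d1*a2*b2 + (1:ℂ)*c1*c1*b2*b2 + (1:ℂ)*b1*d1*c2*d2 + (-1:ℂ)*b1*d1*a2*c2 + (2:ℂ)*b1*c1 + (-1:ℂ)*b1*c1*d2*d2 + (2:ℂ)*b1*c1*b2*c2 + (-1:ℂ)*b1*c1*a2*a2 + (1:ℂ)*b1*b1*c2*c2 + (-1:ℂ)*a1*c1*b2*d2 + (1:ℂ)*a1*c1*a2*b2 + (-1:ℂ)*a1*b1*c2*d2 + (1:ℂ)*a1*b1*a2*c2 + (-1:ℂ)*a1*a1*b2*c2) * h3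
end
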